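/- Let I ⊆ (0,∞) be an open interval and π, χ : I → ℝ differentiable functions such that, for all z ∈ I: π(z) > 0, π(z) ≠ χ(z), and D(z) := π(z)(χ(z)−1) + χ(z) ≠ 0. Suppose that on I the algebraic constraint z² = 1/π(z)² − 3/π(z) + π(z)/D(z) − 3 and the differential equation z·π'(z) = (3+z²)π(z)² + 2π(z) − 1 both hold. Then on I: π³(π+1)(π−χ)·χ'(z) = [α·χ³ + β·χ² + γ·χ + δ]·π'(z), where α = 3(1+4π+5π²+2π³), β = −π(11+29π+17π²), γ = π²(13+17π) and δ = −5π³, all evaluated at π = π(z), χ = χ(z). -/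

import Mathlib

/-!
Differentiating the constraint `z² = F(π, χ)` gives `2z = F_π π' + F_χ χ'`. Multiplying by `z`
and eliminating `z²` by the constraint and `zπ'` by the ODE leaves `z χ'` as a rational function
`R(π, χ)` of `π` and `χ` alone; the theorem is the rational identity
`π³(π+1)(π−χ) R = P(π, χ) (zπ')` with `P` the indicatrix polynomial.
-/

noncomputable section

namespace Synge

/-- The right-hand side `F(p, c)` of the constraint `z² = F(π, χ)`. -/
def zSq (p c : ℝ) : ℝ := 1 / p ^ 2 - 3 / p + p / (p * (c - 1) + c) - 3

def zSqDerivFst (p c : ℝ) : ℝ := -2 / p ^ 3 + 3 / p ^ 2 + c / (p * (c - 1) + c) ^ 2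

def zSqDerivSnd (p c : ℝ) : ℝ := -(p * (p + 1)) / (p * (c - 1) + c) ^ 2

/-- The value of `z π'` prescribed by the ODE, once `z²` is replaced by `F(π, χ)`. -/
def zDerivPi (p c : ℝ) : ℝ := (3 + zSq p c) * p ^ 2 + 2 * p - 1

def indicatrixPoly (p c : ℝ) : ℝ :=
  3 * (1 + 4 * p + 5 * p ^ 2 + 2 * p ^ 3) * c ^ 3 - p * (11 + 29 * p + 17 * p ^ 2) * c ^ 2
    + p ^ 2 * (13 + 17 * p) * c - 5 * p ^ 3

theorem hasDerivAt_zSq {f g : ℝ → ℝ} {f' g' x : ℝ} (hf : HasDerivAt f f' x)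
    (hg : HasDerivAt g g' x) (hf0 : f x ≠ 0) (hD : f x * (g x - 1) + g x ≠ 0) :
    HasDerivAt (fun w => zSq (f w) (g w))
      (zSqDerivFst (f x) (g x) * f' + zSqDerivSnd (f x) (g x) * g') x := by
  have hden : HasDerivAt (fun w => f w * (g w - 1) + g w) (f' * (g x - 1) + f x * g' + g') x :=
    (hf.mul (hg.sub_const 1)).add hg
  have h := ((((hasDerivAt_const x (1 : ℝ)).div (hf.pow 2) (pow_ne_zero 2 hf0)).sub
    ((hasDerivAt_const x (3 : ℝ)).div hf hf0)).add (hf.div hden hD)).sub_const 3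
  refine h.congr_deriv ?_
  simp only [zSqDerivFst, zSqDerivSnd, Pi.pow_apply]
  field_simp
  ring

theorem zSqDerivSnd_ne_zero {p c : ℝ} (hp : p ≠ 0) (hp1 : p + 1 ≠ 0)
    (hD : p * (c - 1) + c ≠ 0) : zSqDerivSnd p c ≠ 0 :=
  div_ne_zero (neg_ne_zero.mpr (mul_ne_zero hp hp1)) (pow_ne_zero 2 hD)

theorem indicatrix_identity {p c : ℝ} (hp : p ≠ 0) (hD : p * (c - 1) + c ≠ 0) :
    p ^ 3 * (p + 1) * (p - c) * (2 * zSq p c - zSqDerivFst p c * zDerivPi p c)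
      = indicatrixPoly p c * zDerivPi p c * zSqDerivSnd p c := by
  simp only [zSq, zSqDerivFst, zSqDerivSnd, zDerivPi, indicatrixPoly]
  field_simp
  ring

theorem indicatrix_of_differentiated_constraint {z p c a b : ℝ} (hz : z ≠ 0) (hp : p ≠ 0)
    (hp1 : p + 1 ≠ 0) (hD : p * (c - 1) + c ≠ 0)
    (hdiff : 2 * z = zSqDerivFst p c * a + zSqDerivSnd p c * b)
    (hconstraint : z ^ 2 = zSq p c) (hode : z * a = zDerivPi p c) :
    p ^ 3 * (p + 1) * (p - c) * b = indicatrixPoly p c * a := by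
  apply mul_left_cancel₀ (mul_ne_zero hz (zSqDerivSnd_ne_zero hp hp1 hD))
  linear_combination (-(z * p ^ 3 * (p + 1) * (p - c))) * hdiff
    + 2 * (p ^ 3 * (p + 1) * (p - c)) * hconstraint
    - (p ^ 3 * (p + 1) * (p - c) * zSqDerivFst p c + indicatrixPoly p c * zSqDerivSnd p c) * hode
    + indicatrix_identity hp hD

end Synge

end

open Synge

theorem synge_indicatrix_ode
    (I : Set ℝ) (hIopen : IsOpen I)
    (hIpos : I ⊆ Set.Ioi (0 : ℝ))
    (π χ : ℝ → ℝ)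
    (hπdiff : ∀ z ∈ I, DifferentiableAt ℝ π z)
    (hχdiff : ∀ z ∈ I, DifferentiableAt ℝ χ z)
    (hπpos : ∀ z ∈ I, 0 < π z)
    (hD : ∀ z ∈ I, π z * (χ z - 1) + χ z ≠ 0)
    (hconstraint : ∀ z ∈ I,
      z ^ 2 = 1 / π z ^ 2 - 3 / π z + π z / (π z * (χ z - 1) + χ z) - 3)
    (hode : ∀ z ∈ I, z * deriv π z = (3 + z ^ 2) * π z ^ 2 + 2 * π z - 1) :
    ∀ z ∈ I,
      π z ^ 3 * (π z + 1) * (π z - χ z) * deriv χ z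
        = (3 * (1 + 4 * π z + 5 * π z ^ 2 + 2 * π z ^ 3) * χ z ^ 3
            - π z * (11 + 29 * π z + 17 * π z ^ 2) * χ z ^ 2
            + π z ^ 2 * (13 + 17 * π z) * χ z
            - 5 * π z ^ 3) * deriv π z := by
  intro z hz
  have hp := hπpos z hz
  have hzsq : z ^ 2 = zSq (π z) (χ z) := hconstraint z hz
  have hF := hasDerivAt_zSq (hπdiff z hz).hasDerivAt (hχdiff z hz).hasDerivAt hp.ne' (hD z hz)
  have hdiff := (hasDerivAt_pow 2 z).unique
    (hF.congr_of_eventuallyEq (Filter.eventuallyEq_of_mem (hIopen.mem_nhds hz) hconstraint))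
  norm_num at hdiff
  have hzπ : z * deriv π z = zDerivPi (π z) (χ z) := by rw [hode z hz, hzsq]; rfl
  exact indicatrix_of_differentiated_constraint (hIpos hz).ne' hp.ne' (by positivity) (hD z hz)
    hdiff hzsq hzπ
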